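/- arXiv:1001.5140 — 3 statements merged into one kernel-verified Lean document; each statement's English description precedes it below -/
import Mathlib

section
/- Every Jordan domain in X coincides with the interior of its closure: if D is a connected component of X − C for some simple closed curve C, then D = Interior(Closure(D)). -/
open Set Topology

abbrev Sphere2 : Type := ↥(Metric.sphere (0 : EuclideanSpace ℝ (Fin 3)) 1)
abbrev Circle1 : Type := ↥(Metric.sphere (0 : EuclideanSpace ℝ (Fin 2)) 1)

/-- A simple closed curve: the image of an injective continuous map from the circle. -/
def IsSimpleClosedCurve {X : Type*} [TopologicalSpace X] (C : Set X) : Prop :=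
  ∃ f : Circle1 → X, Continuous f ∧ Function.Injective f ∧ Set.range f = C

/-- `D` is a connected component of the set `S`. -/
def IsComponentOf {X : Type*} [TopologicalSpace X] (D S : Set X) : Prop :=
  ∃ x ∈ S, D = connectedComponentIn S x

/-- A Jordan domain: a connected component of the complement of some simple closed curve. -/
def IsJordanDomain {X : Type*} [TopologicalSpace X] (D : Set X) : Prop :=
  ∃ C : Set X, IsSimpleClosedCurve C ∧ IsComponentOf D Cᶜ

/-- The Jordan domain axiom: the complement of every simple closed curve `C` has exactly
two connected components, and the boundary of each of them equals `C`. -/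
def JordanDomainAxiom (X : Type*) [TopologicalSpace X] : Prop :=
  ∀ C : Set X, IsSimpleClosedCurve C →
    (∃ D₁ D₂ : Set X, D₁ ≠ D₂ ∧ {D | IsComponentOf D Cᶜ} = {D₁, D₂}) ∧
    (∀ D : Set X, IsComponentOf D Cᶜ → frontier D = C)

/-- The Basis axiom: there is a countable basis of the topology consisting of Jordan domains. -/
def BasisAxiom (X : Type*) [TopologicalSpace X] : Prop :=
  ∃ B : Set (Set X), B.Countable ∧ TopologicalSpace.IsTopologicalBasis B ∧
    ∀ U ∈ B, IsJordanDomain U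

/-- A simple curve with endpoints `a` and `b`: the image of an injective continuous map
`α : [0,1] → X` with `α 0 = a` and `α 1 = b`. -/
def IsSimpleCurve {X : Type*} [TopologicalSpace X] (K : Set X) (a b : X) : Prop :=
  ∃ α : unitInterval → X, Continuous α ∧ Function.Injective α ∧
    Set.range α = K ∧ α 0 = a ∧ α 1 = b

/-!
Let `D'` be the other component of `Cᶜ`. Both components are open, since each is disjoint
from its frontier `C`. A point of `interior (closure D)` outside `D` would lie on
`frontier D = C = frontier D' ⊆ closure D'`; but the open set `interior (closure D)` misses
the open set `D'` (which misses `D`), hence misses `closure D'`.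
-/

theorem IsOpen.interior_closure_eq_of_disjoint {X : Type*} [TopologicalSpace X] {U V : Set X}
    (hU : IsOpen U) (hV : IsOpen V) (hUV : Disjoint U V) (hfr : frontier U ⊆ closure V) :
    interior (closure U) = U := by
  refine Subset.antisymm (fun y hy => ?_) (interior_maximal subset_closure hU)
  by_contra hyU
  have hy_frontier : y ∈ frontier U := ⟨interior_subset hy, by rwa [hU.interior_eq]⟩
  have hdisj : Disjoint (closure V) (interior (closure U)) :=
    ((hUV.symm.closure_right hV).mono_right interior_subset).closure_left isOpen_interior
  exact disjoint_left.mp hdisj (hfr hy_frontier) hy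

namespace IsComponentOf

variable {X : Type*} [TopologicalSpace X] {D D' S : Set X}

theorem subset (hD : IsComponentOf D S) : D ⊆ S := by
  obtain ⟨x, -, rfl⟩ := hD
  exact connectedComponentIn_subset S x

theorem disjoint (hD : IsComponentOf D S) (hD' : IsComponentOf D' S) (hne : D ≠ D') :
    Disjoint D D' := by
  obtain ⟨x, -, rfl⟩ := hD
  obtain ⟨x', -, rfl⟩ := hD'
  refine disjoint_left.mpr fun z hz hz' => hne ?_
  rw [connectedComponentIn_eq hz, connectedComponentIn_eq hz']

end IsComponentOf

namespace JordanDomainAxiom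

variable {X : Type*} [TopologicalSpace X] {C D : Set X}

theorem isOpen (hJ : JordanDomainAxiom X) (hC : IsSimpleClosedCurve C)
    (hD : IsComponentOf D Cᶜ) : IsOpen D := by
  rw [← disjoint_frontier_iff_isOpen, (hJ C hC).2 D hD]
  exact disjoint_compl_right.mono_right hD.subset

theorem exists_ne (hJ : JordanDomainAxiom X) (hC : IsSimpleClosedCurve C)
    (hD : IsComponentOf D Cᶜ) : ∃ D', IsComponentOf D' Cᶜ ∧ D' ≠ D := by
  obtain ⟨D₁, D₂, hne, hcomp⟩ := (hJ C hC).1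
  have hmem : ∀ {E}, IsComponentOf E Cᶜ ↔ E = D₁ ∨ E = D₂ := fun {E} =>
    Set.ext_iff.mp hcomp E
  rcases hmem.mp hD with rfl | rfl
  · exact ⟨D₂, hmem.mpr (Or.inr rfl), hne.symm⟩
  · exact ⟨D₁, hmem.mpr (Or.inl rfl), hne⟩

end JordanDomainAxiom

theorem jordanDomain_eq_interior_closure_general {X : Type*} [TopologicalSpace X]
    (hJ : JordanDomainAxiom X)
    (C D : Set X) (hC : IsSimpleClosedCurve C) (hD : IsComponentOf D Cᶜ) :
    D = interior (closure D) := by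
  obtain ⟨D', hD', hne⟩ := hJ.exists_ne hC hD
  have hfr : frontier D ⊆ closure D' := by
    rw [(hJ C hC).2 D hD, ← (hJ C hC).2 D' hD']
    exact frontier_subset_closure
  exact ((hJ.isOpen hC hD).interior_closure_eq_of_disjoint (hJ.isOpen hC hD')
    (hD.disjoint hD' hne.symm) hfr).symm

/-- Every Jordan domain coincides with the interior of its closure. -/
theorem jordanDomain_eq_interior_closure {X : Type*} [TopologicalSpace X] [CompactSpace X]
    [ConnectedSpace X] [LocallyPathConnectedSpace X] [T2Space X]
    (hJ : JordanDomainAxiom X) (hB : BasisAxiom X)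
    (C D : Set X) (hC : IsSimpleClosedCurve C) (hD : IsComponentOf D Cᶜ) :
    D = interior (closure D) :=
  jordanDomain_eq_interior_closure_general hJ C D hC hD
end

section
/- No proper arc of a simple closed curve separates X: if C is a simple closed curve in X, parameterized by an injective continuous map γ : S¹ → X, and A = γ(J) is the image of a proper closed arc J ⊊ S¹, then the complement X − A is connected. -/
open Set Topology

/-!
Write `C = γ(S¹)` and `A = γ(J)`, so that `X − A = (X − C) ∪ (C − A)`. By the Jordan domain
axiom every component `D` of `X − C` has frontier `C`, hence `D ∪ (C − A)` lies between `D` and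
its closure and is connected. All these connected sets contain a point of `γ(S¹ − J) = C − A`,
which is nonempty because `J` is proper, so their union `X − A` is connected.
-/

section

variable {X : Type*} [TopologicalSpace X]

theorem isConnected_compl_of_subset_closure_connectedComponentIn {A C : Set X}
    (hclosure : ∀ x ∈ Cᶜ, C ⊆ closure (connectedComponentIn Cᶜ x))
    (hCc : Cᶜ.Nonempty) (hAC : A ⊆ C) (hCA : (C \ A).Nonempty) : IsConnected Aᶜ := by
  obtain ⟨z, hzC, hzA⟩ := hCA
  obtain ⟨w, hw⟩ := hCc
  have hpiece : ∀ x ∈ Cᶜ, ∃ t ⊆ Aᶜ, insert x (C \ A) ⊆ t ∧ IsPreconnected t := fun x hx =>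
    ⟨connectedComponentIn Cᶜ x ∪ (C \ A),
      union_subset (fun y hy hyA => connectedComponentIn_subset _ _ hy (hAC hyA))
        (sdiff_subset_compl _ _),
      insert_subset (Or.inl (mem_connectedComponentIn hx)) subset_union_right,
      isPreconnected_connectedComponentIn.subset_closure subset_union_left
        (union_subset subset_closure (sdiff_subset.trans (hclosure x hx)))⟩
  refine ⟨⟨z, hzA⟩, isPreconnected_of_forall z fun y hy => ?_⟩
  by_cases hyC : y ∈ C
  · obtain ⟨t, htA, hsub, ht⟩ := hpiece w hw
    exact ⟨t, htA, hsub (Or.inr ⟨hzC, hzA⟩), hsub (Or.inr ⟨hyC, hy⟩), ht⟩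
  · obtain ⟨t, htA, hsub, ht⟩ := hpiece y hyC
    exact ⟨t, htA, hsub (Or.inr ⟨hzC, hzA⟩), hsub (Or.inl rfl), ht⟩

namespace JordanDomainAxiom

variable {C : Set X}

theorem compl_nonempty (hJ : JordanDomainAxiom X) (hC : IsSimpleClosedCurve C) :
    Cᶜ.Nonempty := by
  obtain ⟨D₁, D₂, -, hcomp⟩ := (hJ C hC).1
  have hD₁ : D₁ ∈ {D | IsComponentOf D Cᶜ} := hcomp ▸ mem_insert D₁ {D₂}
  obtain ⟨x, hx, -⟩ := hD₁
  exact ⟨x, hx⟩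

theorem subset_closure_connectedComponentIn (hJ : JordanDomainAxiom X)
    (hC : IsSimpleClosedCurve C) {x : X} (hx : x ∈ Cᶜ) :
    C ⊆ closure (connectedComponentIn Cᶜ x) :=
  ((hJ C hC).2 _ ⟨x, hx, rfl⟩).symm.subset.trans frontier_subset_closure

end JordanDomainAxiom

end

theorem proper_arc_not_separating_general {X : Type*} [TopologicalSpace X]
    (hJ : JordanDomainAxiom X)
    (γ : Circle1 → X) (hγc : Continuous γ) (hγi : Function.Injective γ)
    (J : Set Circle1) (hJprop : J ≠ Set.univ) :
    IsConnected (γ '' J)ᶜ := by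
  have hC : IsSimpleClosedCurve (range γ) := ⟨γ, hγc, hγi, rfl⟩
  refine isConnected_compl_of_subset_closure_connectedComponentIn
    (fun _ => hJ.subset_closure_connectedComponentIn hC) (hJ.compl_nonempty hC)
    (image_subset_range γ J) ?_
  rw [range_sdiff_image hγi]
  exact (nonempty_compl.mpr hJprop).image γ

/-- No proper arc of a simple closed curve separates `X`. -/
theorem proper_arc_not_separating {X : Type*} [TopologicalSpace X] [CompactSpace X]
    [ConnectedSpace X] [LocallyPathConnectedSpace X] [T2Space X]
    (hJ : JordanDomainAxiom X) (hB : BasisAxiom X)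
    (γ : Circle1 → X) (hγc : Continuous γ) (hγi : Function.Injective γ)
    (J : Set Circle1) (hJcl : IsClosed J) (hJconn : IsPreconnected J) (hJprop : J ≠ Set.univ) :
    IsConnected (γ '' J)ᶜ :=
  proper_arc_not_separating_general hJ γ hγc hγi J hJprop
end

section
/- (Simplification of paths) Let X be a Hausdorff topological space and let α : [0,1] → X be a continuous path with α(0) ≠ α(1). Then there exists an injective continuous path β : [0,1] → X such that β(0) = α(0), β(1) = α(1), and the image β([0,1]) is contained in the image α([0,1]). -/
open Set Topology

/-!
First shrink the parameter interval to `[a, b]` so that the path `γ` takes its end values only at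
`a` and `b`. Call a closed set `A ⊆ [a, b]` containing `a` and `b` a shortcut set for `γ` if `γ`
takes equal values at the two ends of every gap of `A`. By Zorn's lemma (a compactness argument
handles intersections of chains) there is a minimal shortcut set `A`. Minimality forces
`γ s ≠ γ t` for `s < t` in `A` unless `(s, t)` is a gap of `A`, and it makes `A` perfect. The
distribution function of an atomless probability measure supported on `A` and charging every open
set that meets `A` collapses exactly the gaps of `A` and maps `A` onto `[0, 1]`; `γ` descends
along it to an injective path.
-/

open MeasureTheory ProbabilityTheory Filter TopologicalSpace
open scoped ENNReal

-- Makes Haar measure on the Cantor group atomless, via `IsHaarMeasure.nullSingletonClass`.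
instance : (𝓝[≠] (0 : ℕ → ZMod 2)).NeBot := by
  have hlim : Tendsto (fun n => Pi.single n 1 : ℕ → ℕ → ZMod 2) atTop (𝓝[≠] 0) := by
    refine tendsto_nhdsWithin_iff.2 ⟨tendsto_pi_nhds.2 fun m => tendsto_const_nhds.congr' ?_,
      Eventually.of_forall fun n => by simp⟩
    filter_upwards [eventually_gt_atTop m] with n hn
    simp [hn.ne]
  exact hlim.neBot

theorem Perfect.exists_isProbabilityMeasure_nullSingletonClass {α : Type*} [MetricSpace α]
    [CompleteSpace α] [MeasurableSpace α] [BorelSpace α] {C : Set α} (hC : Perfect C)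
    (hne : C.Nonempty) :
    ∃ μ : Measure α, IsProbabilityMeasure μ ∧ NullSingletonClass μ ∧ μ Cᶜ = 0 := by
  obtain ⟨f, hfC, hfc, hfi⟩ := hC.exists_nat_bool_injection hne
  -- `ℕ → ZMod 2` is the Cantor space with a compact group structure, hence a Haar probability.
  let e : (ℕ → ZMod 2) → ℕ → Bool := fun x n => decide (x n = 1)
  have he : Continuous e := continuous_pi fun n =>
    (continuous_of_discreteTopology (f := fun z : ZMod 2 => decide (z = 1))).comp
      (continuous_apply n)
  have hei : Function.Injective e := fun x y hxy => funext fun n => by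
    have hn := congr_fun hxy n
    simp only [e, decide_eq_decide] at hn
    have hZMod2 : ∀ p q : ZMod 2, (p = 1 ↔ q = 1) → p = q := by decide
    exact hZMod2 _ _ hn
  let μ₀ : Measure (ℕ → ZMod 2) := Measure.addHaarMeasure ⊤
  have : IsProbabilityMeasure μ₀ := by
    have := Measure.addHaarMeasure_self (K₀ := (⊤ : PositiveCompacts (ℕ → ZMod 2)))
    rw [PositiveCompacts.coe_top] at this
    exact ⟨this⟩
  have hg : Measurable (f ∘ e) := (hfc.comp he).measurable
  refine ⟨μ₀.map (f ∘ e), Measure.isProbabilityMeasure_map hg.aemeasurable, ⟨fun x => ?_⟩, ?_⟩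
  · rw [Measure.map_apply hg (measurableSet_singleton x)]
    exact (Set.subsingleton_singleton.preimage (hfi.comp hei)).measure_zero μ₀
  · rw [Measure.map_apply hg hC.closed.measurableSet.compl]
    convert measure_empty (μ := μ₀)
    exact eq_empty_of_forall_notMem fun x hx => hx (hfC (mem_range_self _))

theorem Perfect.exists_seq_perfect_piBase {α : Type*} [MetricSpace α]
    [SecondCountableTopology α] {A : Set α} (hA : Perfect A) (hne : A.Nonempty) :
    ∃ C : ℕ → Set α, (∀ n, Perfect (C n) ∧ (C n).Nonempty ∧ C n ⊆ A) ∧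
      ∀ U, IsOpen U → (U ∩ A).Nonempty → ∃ n, C n ⊆ U := by
  have : Nonempty A := hne.to_subtype
  obtain ⟨d, hd⟩ := TopologicalSpace.exists_dense_seq A
  let C : ℕ → Set α := fun n =>
    closure (Metric.ball (d n.unpair.1 : α) (1 / (n.unpair.2 + 1)) ∩ A)
  refine ⟨C, fun n => ⟨(hA.acc.open_inter Metric.isOpen_ball).perfect_closure,
    ⟨d _, subset_closure ⟨Metric.mem_ball_self (by positivity), (d _).2⟩⟩,
    closure_minimal inter_subset_right hA.closed⟩, ?_⟩
  rintro U hU ⟨x, hxU, hxA⟩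
  obtain ⟨ε, hε, hball⟩ := Metric.isOpen_iff.1 hU x hxU
  obtain ⟨k, hk⟩ := exists_nat_one_div_lt (half_pos hε)
  obtain ⟨i, hi⟩ := Metric.denseRange_iff.1 hd ⟨x, hxA⟩ (1 / (k + 1)) (by positivity)
  refine ⟨Nat.pair i k, fun y hy => hball ?_⟩
  have hy' : dist y (d i) ≤ 1 / (k + 1) := by
    simpa [C] using Metric.closure_ball_subset_closedBall (closure_mono inter_subset_left hy)
  have hi' : dist (d i : α) x < 1 / (k + 1) := by
    rw [dist_comm]; exact hi
  calc dist y x ≤ dist y (d i) + dist (d i : α) x := dist_triangle _ _ _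
    _ < ε := by linarith

theorem Perfect.exists_isProbabilityMeasure_nullSingletonClass_pos {α : Type*} [MetricSpace α]
    [CompleteSpace α] [SecondCountableTopology α] [MeasurableSpace α] [BorelSpace α]
    {A : Set α} (hA : Perfect A) (hne : A.Nonempty) :
    ∃ ν : Measure α, IsProbabilityMeasure ν ∧ NullSingletonClass ν ∧ ν Aᶜ = 0 ∧
      ∀ U, IsOpen U → (U ∩ A).Nonempty → 0 < ν U := by
  obtain ⟨C, hC, hCU⟩ := hA.exists_seq_perfect_piBase hne
  choose μ _ _ hμC using fun n =>
    (hC n).1.exists_isProbabilityMeasure_nullSingletonClass (hC n).2.1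
  let ν : Measure α := Measure.sum fun n => (2⁻¹ : ℝ≥0∞) ^ (n + 1) • μ n
  have hν : ∀ s, MeasurableSet s → ν s = ∑' n, (2⁻¹ : ℝ≥0∞) ^ (n + 1) * μ n s := fun s hs => by
    simp [ν, Measure.sum_apply _ hs]
  refine ⟨ν, ⟨?_⟩, ⟨fun x => ?_⟩, ?_, ?_⟩
  · simp only [hν univ MeasurableSet.univ, measure_univ, mul_one, ENNReal.tsum_geometric_add_one,
      ENNReal.one_sub_inv_two, inv_inv]
    exact ENNReal.inv_mul_cancel (by norm_num) (by norm_num)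
  · simp [hν _ (measurableSet_singleton x)]
  · rw [hν _ hA.closed.measurableSet.compl]
    simp [measure_mono_null (compl_subset_compl.2 (hC _).2.2) (hμC _)]
  · intro U hU hUA
    obtain ⟨n, hn⟩ := hCU U hU hUA
    have hμU : μ n U = 1 := (prob_compl_eq_zero_iff hU.measurableSet).1
      (measure_mono_null (compl_subset_compl.2 hn) (hμC n))
    have hw : (0 : ℝ≥0∞) < 2⁻¹ ^ (n + 1) := ENNReal.pow_pos (by norm_num) _
    calc (0 : ℝ≥0∞) < ((2⁻¹ : ℝ≥0∞) ^ (n + 1) • μ n) U := by simpa [hμU] using hw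
      _ ≤ ν U := Measure.le_sum _ n U

theorem ProbabilityTheory.continuous_cdf (μ : Measure ℝ) [IsProbabilityMeasure μ]
    [NullSingletonClass μ] : Continuous (cdf μ) := by
  refine continuous_iff_continuousAt.2 fun x =>
    (cdf μ).mono.continuousAt_iff_leftLim_eq_rightLim.2 ?_
  have h := (cdf μ).measure_singleton x
  rw [measure_cdf, measure_singleton, eq_comm, ENNReal.ofReal_eq_zero] at h
  have := (cdf μ).mono.leftLim_le (le_refl x)
  rw [StieltjesFunction.rightLim_eq]
  linarith

theorem ProbabilityTheory.cdf_eq_cdf_iff (μ : Measure ℝ) [IsProbabilityMeasure μ]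
    [NullSingletonClass μ] {s t : ℝ} (hst : s ≤ t) : cdf μ s = cdf μ t ↔ μ (Ioo s t) = 0 := by
  have hIoc := (cdf μ).measure_Ioc s t
  rw [measure_cdf] at hIoc
  rw [measure_congr Ioo_ae_eq_Ioc, hIoc, ENNReal.ofReal_eq_zero]
  have := (cdf μ).mono hst
  constructor <;> intro h <;> linarith

theorem IsClosed.exists_disjoint_Ioo_of_disjoint_Ioo {A : Set ℝ} (hA : IsClosed A) {x y c d : ℝ}
    (hx : x ∈ A) (hy : y ∈ A) (hxc : x ≤ c) (hdy : d ≤ y) (hcd : Disjoint (Ioo c d) A) :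
    ∃ u ∈ A, ∃ v ∈ A, u ∈ Icc x c ∧ v ∈ Icc d y ∧ Disjoint (Ioo u v) A := by
  obtain ⟨u, ⟨huA, hu⟩, hu_max⟩ :=
    (isCompact_Icc.inter_left hA).exists_isGreatest ⟨x, hx, le_rfl, hxc⟩
  obtain ⟨v, ⟨hvA, hv⟩, hv_min⟩ :=
    (isCompact_Icc.inter_left hA).exists_isLeast ⟨y, hy, hdy, le_rfl⟩
  refine ⟨u, huA, v, hvA, hu, hv, disjoint_left.2 fun z hz hzA => ?_⟩
  rcases le_or_gt z c with hzc | hcz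
  · exact hz.1.not_ge (hu_max ⟨hzA, hu.1.trans hz.1.le, hzc⟩)
  rcases le_or_gt d z with hdz | hzd
  · exact hz.2.not_ge (hv_min ⟨hzA, hdz, hz.2.le.trans hv.2⟩)
  exact disjoint_left.1 hcd ⟨hcz, hzd⟩ hzA

theorem Perfect.exists_continuous_collapsing_gaps {A : Set ℝ} {a b : ℝ} (hA : Perfect A)
    (hAab : A ⊆ Icc a b) (ha : a ∈ A) (hb : b ∈ A) :
    ∃ Q : ℝ → ℝ, Continuous Q ∧ Q a = 0 ∧ Q b = 1 ∧ Q '' A = Icc 0 1 ∧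
      ∀ ⦃s t⦄, s ≤ t → (Q s = Q t ↔ Disjoint (Ioo s t) A) := by
  obtain ⟨ν, _, _, hνA, hνpos⟩ := hA.exists_isProbabilityMeasure_nullSingletonClass_pos ⟨a, ha⟩
  have hgap : ∀ ⦃s t⦄, s ≤ t → (cdf ν s = cdf ν t ↔ Disjoint (Ioo s t) A) := fun s t hst => by
    rw [cdf_eq_cdf_iff ν hst, disjoint_iff_inter_eq_empty]
    refine ⟨fun h => ?_, fun h =>
      measure_mono_null (disjoint_iff_inter_eq_empty.2 h).subset_compl_right hνA⟩
    by_contra hne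
    exact (hνpos _ isOpen_Ioo (nonempty_iff_ne_empty.2 hne)).ne' h
  have hQa : cdf ν a = 0 := by
    have : ν (Iic a) = 0 := by
      refine measure_mono_null (fun x (hx : x ≤ a) => ?_)
        (measure_union_null hνA (measure_singleton a))
      by_cases hxA : x ∈ A
      · exact Or.inr (le_antisymm hx (hAab hxA).1)
      · exact Or.inl hxA
    simp [cdf_eq_real, measureReal_def, this]
  have hQb : cdf ν b = 1 := by
    have : ν (Iic b) = 1 := (prob_compl_eq_zero_iff measurableSet_Iic).1 <|
      measure_mono_null (fun x (hx : ¬x ≤ b) (hxA : x ∈ A) => hx (hAab hxA).2) hνA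
    simp [cdf_eq_real, measureReal_def, this]
  refine ⟨cdf ν, continuous_cdf ν, hQa, hQb, ?_, hgap⟩
  refine Subset.antisymm ?_ fun y hy => ?_
  · rintro _ ⟨x, -, rfl⟩
    exact ⟨cdf_nonneg ν x, cdf_le_one ν x⟩
  rw [← hQa, ← hQb] at hy
  obtain ⟨x, hx, rfl⟩ := intermediate_value_Icc (hAab ha).2 (continuous_cdf ν).continuousOn hy
  obtain ⟨u, huA, v, -, hu, hv, huv⟩ :=
    hA.closed.exists_disjoint_Ioo_of_disjoint_Ioo ha hb hx.1 hx.2 (by simp)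
  refine ⟨u, huA, le_antisymm ((cdf ν).mono hu.2) ?_⟩
  rw [(hgap (hu.2.trans hv.1)).2 huv]
  exact (cdf ν).mono hv.1

structure IsShortcutSet {X : Type*} (γ : ℝ → X) (a b : ℝ) (A : Set ℝ) : Prop where
  isClosed : IsClosed A
  subset_Icc : A ⊆ Icc a b
  left_mem : a ∈ A
  right_mem : b ∈ A
  eq_of_disjoint : ∀ ⦃s⦄, s ∈ A → ∀ ⦃t⦄, t ∈ A → s < t → Disjoint (Ioo s t) A → γ s = γ t

theorem isShortcutSet_Icc {X : Type*} {γ : ℝ → X} {a b : ℝ} (hab : a ≤ b) :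
    IsShortcutSet γ a b (Icc a b) where
  isClosed := isClosed_Icc
  subset_Icc := le_rfl
  left_mem := left_mem_Icc.2 hab
  right_mem := right_mem_Icc.2 hab
  eq_of_disjoint s hs t ht hst hd := by
    have hm : (s + t) / 2 ∈ Ioo s t := ⟨by linarith, by linarith⟩
    exact absurd (disjoint_left.1 hd hm) (not_not.2 ⟨by linarith [hs.1], by linarith [ht.2]⟩)

namespace IsShortcutSet

variable {X : Type*} {γ : ℝ → X} {a b : ℝ} {A : Set ℝ}

theorem sInter [TopologicalSpace X] [T2Space X] (hγ : Continuous γ) {c : Set (Set ℝ)}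
    (hc : ∀ A ∈ c, IsShortcutSet γ a b A) (hchain : IsChain (· ⊆ ·) c) (hne : c.Nonempty) :
    IsShortcutSet γ a b (⋂₀ c) := by
  obtain ⟨A₀, hA₀⟩ := hne
  have : Nonempty c := ⟨⟨A₀, hA₀⟩⟩
  refine ⟨isClosed_sInter fun A hA => (hc A hA).isClosed,
    (sInter_subset_of_mem hA₀).trans (hc A₀ hA₀).subset_Icc,
    fun A hA => (hc A hA).left_mem, fun A hA => (hc A hA).right_mem, fun s hs t ht hst hd => ?_⟩
  have hnear : ∀ ε > 0, 2 * ε < t - s →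
      ∃ u v, γ u = γ v ∧ u ∈ Icc s (s + ε) ∧ v ∈ Icc (t - ε) t := by
    intro ε hε hεst
    obtain ⟨⟨A, hA⟩, hAK⟩ :=
      (isCompact_Icc (a := s + ε) (b := t - ε)).elim_directed_family_closed
        (fun A : c => (A : Set ℝ)) (fun A => (hc A A.2).isClosed) (by
          rw [← sInter_eq_iInter, ← disjoint_iff_inter_eq_empty]
          exact hd.mono_left (Icc_subset_Ioo (by linarith) (by linarith)))
        fun A B => (hchain.total A.2 B.2).elim (fun h => ⟨A, subset_rfl, h⟩)
          (fun h => ⟨B, h, subset_rfl⟩)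
    obtain ⟨u, huA, v, hvA, hu, hv, huv⟩ :=
      (hc A hA).isClosed.exists_disjoint_Ioo_of_disjoint_Ioo (hs A hA) (ht A hA)
        (by linarith) (by linarith)
        ((disjoint_iff_inter_eq_empty.2 hAK).mono_left Ioo_subset_Icc_self)
    exact ⟨u, v, (hc A hA).eq_of_disjoint huA hvA (by linarith [hu.2, hv.1]) huv, hu, hv⟩
  have hclosed : IsClosed {p : ℝ × ℝ | γ p.1 = γ p.2} :=
    isClosed_eq (hγ.comp continuous_fst) (hγ.comp continuous_snd)
  refine hclosed.closure_subset (a := (s, t)) (Metric.mem_closure_iff.2 fun ε hε => ?_)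
  obtain ⟨u, v, huv, hu, hv⟩ := hnear (min (ε / 2) ((t - s) / 3)) (by positivity)
    (by linarith [min_le_right (ε / 2) ((t - s) / 3)])
  refine ⟨(u, v), huv, ?_⟩
  have := min_le_left (ε / 2) ((t - s) / 3)
  rw [Prod.dist_eq, max_lt_iff, Real.dist_eq, Real.dist_eq, abs_lt, abs_lt]
  refine ⟨⟨?_, ?_⟩, ?_, ?_⟩ <;> linarith [hu.1, hu.2, hv.1, hv.2]

theorem exists_minimal [TopologicalSpace X] [T2Space X] (hγ : Continuous γ) (hab : a ≤ b) :
    ∃ A, Minimal (IsShortcutSet γ a b) A := by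
  obtain ⟨A, -, hA⟩ := zorn_superset_nonempty {A | IsShortcutSet γ a b A}
    (fun c hc hchain hne => ⟨⋂₀ c, sInter hγ hc hchain hne, fun _ => sInter_subset_of_mem⟩)
    _ (isShortcutSet_Icc hab)
  exact ⟨A, hA⟩

theorem disjoint_Ioo_of_minimal (hA : Minimal (IsShortcutSet γ a b) A) {s t : ℝ} (hs : s ∈ A)
    (ht : t ∈ A) (heq : γ s = γ t) : Disjoint (Ioo s t) A := by
  obtain ⟨hA, hA_min⟩ := hA
  have hcut : IsShortcutSet γ a b (A \ Ioo s t) := by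
    refine ⟨hA.isClosed.sdiff isOpen_Ioo, sdiff_subset.trans hA.subset_Icc,
      ⟨hA.left_mem, fun h => h.1.not_ge (hA.subset_Icc hs).1⟩,
      ⟨hA.right_mem, fun h => h.2.not_ge (hA.subset_Icc ht).2⟩, fun u hu v hv huv hd => ?_⟩
    by_cases hdA : Disjoint (Ioo u v) A
    · exact hA.eq_of_disjoint hu.1 hv.1 huv hdA
    obtain ⟨w, hw, hwA⟩ := not_disjoint_iff.1 hdA
    have hwst : w ∈ Ioo s t := by_contra fun h => disjoint_left.1 hd hw ⟨hwA, h⟩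
    have hs' : s ∉ Ioo u v := fun h => disjoint_left.1 hd h ⟨hs, fun h' => h'.1.ne rfl⟩
    have ht' : t ∉ Ioo u v := fun h => disjoint_left.1 hd h ⟨ht, fun h' => h'.2.ne rfl⟩
    obtain rfl : u = s := by
      have := hu.2
      simp only [mem_Ioo, not_and_or, not_lt] at this hs'
      rcases this with h | h <;> rcases hs' with h' | h' <;>
        linarith [hw.1, hw.2, hwst.1, hwst.2]
    obtain rfl : v = t := by
      have := hv.2
      simp only [mem_Ioo, not_and_or, not_lt] at this ht'
      rcases this with h | h <;> rcases ht' with h' | h' <;>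
        linarith [hw.1, hw.2, hwst.1, hwst.2]
    exact heq
  exact disjoint_left.2 fun x hx hxA => (hA_min hcut sdiff_subset hxA).2 hx

theorem preperfect_of_minimal (hA : Minimal (IsShortcutSet γ a b) A) (hab : a < b)
    (ha : ∀ t ∈ Ioc a b, γ t ≠ γ a) (hb : ∀ t ∈ Ico a b, γ t ≠ γ b) : Preperfect A := by
  have hAab := hA.1.subset_Icc
  intro x hxA
  by_contra hacc
  obtain ⟨U, hU, hUA⟩ : ∃ U ∈ 𝓝 x, ∀ y ∈ U ∩ A, y = x := by
    simpa [accPt_iff_nhds] using hacc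
  obtain ⟨l, r, ⟨hlx, hxr⟩, hlr⟩ := mem_nhds_iff_exists_Ioo_subset.1 hU
  have hl : Disjoint (Ioo l x) A := disjoint_left.2 fun y hy hyA =>
    hy.2.ne (hUA y ⟨hlr ⟨hy.1, hy.2.trans hxr⟩, hyA⟩)
  have hr : Disjoint (Ioo x r) A := disjoint_left.2 fun y hy hyA =>
    hy.1.ne' (hUA y ⟨hlr ⟨hlx.trans hy.1, hy.2⟩, hyA⟩)
  have hleft : a < x → ∃ u ∈ A, u < x ∧ γ u = γ x := fun hax => by
    obtain ⟨u, huA, v, -, hu, hv, huv⟩ := hA.1.isClosed.exists_disjoint_Ioo_of_disjoint_Ioo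
      hA.1.left_mem hxA (le_max_right l a) le_rfl (hl.mono_left (Ioo_subset_Ioo_left le_sup_left))
    rw [le_antisymm hv.2 hv.1] at huv
    have hux : u < x := hu.2.trans_lt (max_lt hlx hax)
    exact ⟨u, huA, hux, hA.1.eq_of_disjoint huA hxA hux huv⟩
  have hright : x < b → ∃ v ∈ A, x < v ∧ γ x = γ v := fun hxb => by
    obtain ⟨u, -, v, hvA, hu, hv, huv⟩ := hA.1.isClosed.exists_disjoint_Ioo_of_disjoint_Ioo
      hxA hA.1.right_mem le_rfl (min_le_right r b) (hr.mono_left (Ioo_subset_Ioo_right inf_le_left))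
    rw [le_antisymm hu.2 hu.1] at huv
    have hxv : x < v := (lt_min hxr hxb).trans_le hv.1
    exact ⟨v, hvA, hxv, hA.1.eq_of_disjoint hxA hvA hxv huv⟩
  rcases (hAab hxA).1.eq_or_lt with rfl | hax
  · obtain ⟨v, hvA, hxv, hγ⟩ := hright hab
    exact ha v ⟨hxv, (hAab hvA).2⟩ hγ.symm
  rcases (hAab hxA).2.eq_or_lt with rfl | hxb
  · obtain ⟨u, huA, hux, hγ⟩ := hleft hax
    exact hb u ⟨(hAab huA).1, hux⟩ hγ
  obtain ⟨u, huA, hux, hγu⟩ := hleft hax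
  obtain ⟨v, hvA, hxv, hγv⟩ := hright hxb
  exact disjoint_left.1 (disjoint_Ioo_of_minimal hA huA hvA (hγu.trans hγv)) ⟨hux, hxv⟩ hxA

end IsShortcutSet

theorem exists_continuous_injective_comp_eq {Z Y X : Type*} [TopologicalSpace Z]
    [CompactSpace Z] [TopologicalSpace Y] [T2Space Y] [TopologicalSpace X] {q : Z → Y} {g : Z → X}
    (hq : Continuous q) (hqs : Function.Surjective q) (hg : Continuous g)
    (hker : ∀ z w, g z = g w ↔ q z = q w) :
    ∃ β : Y → X, Continuous β ∧ Function.Injective β ∧ β ∘ q = g := by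
  have hquot : IsQuotientMap (ContinuousMap.mk q hq) := hq.isClosedMap.isQuotientMap hq hqs
  have hfac : Function.FactorsThrough g q := fun z w h => (hker z w).2 h
  let β := hquot.lift ⟨g, hg⟩ hfac
  have hβq : β ∘ q = g :=
    funext fun z => DFunLike.congr_fun (hquot.lift_comp ⟨g, hg⟩ hfac) z
  refine ⟨β, β.continuous, fun y y' h => ?_, hβq⟩
  obtain ⟨z, rfl⟩ := hqs y
  obtain ⟨w, rfl⟩ := hqs y'
  exact (hker z w).1 ((congr_fun hβq z).symm.trans (h.trans (congr_fun hβq w)))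

theorem exists_injective_path_of_forall_ne {X : Type*} [TopologicalSpace X] [T2Space X]
    {γ : ℝ → X} (hγ : Continuous γ) {a b : ℝ} (hab : a < b) (ha : ∀ t ∈ Ioc a b, γ t ≠ γ a)
    (hb : ∀ t ∈ Ico a b, γ t ≠ γ b) :
    ∃ β : unitInterval → X, Continuous β ∧ Function.Injective β ∧ β 0 = γ a ∧ β 1 = γ b ∧
      range β ⊆ γ '' Icc a b := by
  obtain ⟨A, hA⟩ := IsShortcutSet.exists_minimal hγ hab.le
  have hAab := hA.1.subset_Icc
  obtain ⟨Q, hQc, hQa, hQb, hQA, hQgap⟩ := Perfect.exists_continuous_collapsing_gaps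
    ⟨hA.1.isClosed, IsShortcutSet.preperfect_of_minimal hA hab ha hb⟩ hAab hA.1.left_mem
    hA.1.right_mem
  have hker_le : ∀ s t : A, (s : ℝ) ≤ t → (γ s = γ t ↔ Q s = Q t) := fun s t hst => by
    rw [hQgap hst]
    refine ⟨IsShortcutSet.disjoint_Ioo_of_minimal hA s.2 t.2, fun hd => ?_⟩
    rcases hst.eq_or_lt with h | h
    · rw [h]
    · exact hA.1.eq_of_disjoint s.2 t.2 h hd
  have hker : ∀ s t : A, γ s = γ t ↔ Q s = Q t := fun s t => by
    rcases le_total (s : ℝ) t with h | h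
    · exact hker_le s t h
    · rw [eq_comm, @eq_comm ℝ]
      exact hker_le t s h
  let q : A → unitInterval := fun s => ⟨Q s, hQA.subset (mem_image_of_mem Q s.2)⟩
  have hqs : Function.Surjective q := fun y => by
    obtain ⟨s, hs, hsy⟩ := hQA.symm.subset y.2
    exact ⟨⟨s, hs⟩, Subtype.ext hsy⟩
  have : CompactSpace A :=
    isCompact_iff_compactSpace.1 (isCompact_Icc.of_isClosed_subset hA.1.isClosed hAab)
  obtain ⟨β, hβc, hβi, hβq⟩ := exists_continuous_injective_comp_eq (q := q)
    ((hQc.comp continuous_subtype_val).subtype_mk _) hqs (hγ.comp continuous_subtype_val)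
    fun s t => (hker s t).trans (Subtype.coe_inj (a := q s) (b := q t))
  have hβ : ∀ s : A, β (q s) = γ s := congr_fun hβq
  refine ⟨β, hβc, hβi, ?_, ?_, ?_⟩
  · rw [show (0 : unitInterval) = q ⟨a, hA.1.left_mem⟩ from Subtype.ext hQa.symm, hβ]
  · rw [show (1 : unitInterval) = q ⟨b, hA.1.right_mem⟩ from Subtype.ext hQb.symm, hβ]
  · rintro _ ⟨y, rfl⟩
    obtain ⟨s, rfl⟩ := hqs y
    rw [hβ]
    exact mem_image_of_mem γ (hAab s.2)

theorem exists_lt_forall_ne_endpoints {X : Type*} [TopologicalSpace X] [T1Space X] {γ : ℝ → X}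
    (hγ : Continuous γ) {a b : ℝ} (hab : a ≤ b) (hne : γ a ≠ γ b) :
    ∃ a' b', a' < b' ∧ γ a' = γ a ∧ γ b' = γ b ∧ (∀ t ∈ Ioc a' b', γ t ≠ γ a') ∧
      ∀ t ∈ Ico a' b', γ t ≠ γ b' := by
  obtain ⟨a', ⟨ha', ha'γ⟩, ha'_max⟩ :=
    (isCompact_Icc.inter_right (isClosed_singleton.preimage hγ)).exists_isGreatest
      (⟨a, left_mem_Icc.2 hab, rfl⟩ : (Icc a b ∩ γ ⁻¹' {γ a}).Nonempty)
  obtain ⟨b', ⟨hb', hb'γ⟩, hb'_min⟩ :=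
    (isCompact_Icc.inter_right (isClosed_singleton.preimage hγ)).exists_isLeast
      (⟨b, right_mem_Icc.2 ha'.2, rfl⟩ : (Icc a' b ∩ γ ⁻¹' {γ b}).Nonempty)
  have ha'γ : γ a' = γ a := ha'γ
  have hb'γ : γ b' = γ b := hb'γ
  refine ⟨a', b', hb'.1.lt_of_ne fun h => hne (by rw [← ha'γ, h, hb'γ]), ha'γ, hb'γ,
    fun t ht h => ?_, fun t ht h => ?_⟩
  · exact ht.1.not_ge (ha'_max ⟨⟨ha'.1.trans ht.1.le, ht.2.trans hb'.2⟩, h.trans ha'γ⟩)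
  · exact ht.2.not_ge (hb'_min ⟨⟨ht.1, ht.2.le.trans hb'.2⟩, h.trans hb'γ⟩)

/-- **Simplification of paths.** Any continuous path in a Hausdorff space with distinct
endpoints contains a simple (injective) path with the same endpoints. -/
theorem simplification_of_paths {X : Type*} [TopologicalSpace X] [T2Space X]
    (α : unitInterval → X) (hα : Continuous α) (h : α 0 ≠ α 1) :
    ∃ β : unitInterval → X, Continuous β ∧ Function.Injective β ∧
      β 0 = α 0 ∧ β 1 = α 1 ∧ Set.range β ⊆ Set.range α := by
  let γ : ℝ → X := IccExtend zero_le_one α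
  have hγ : Continuous γ := continuous_IccExtend_iff.2 hα
  have hγ0 : γ 0 = α 0 := IccExtend_val _ _ 0
  have hγ1 : γ 1 = α 1 := IccExtend_val _ _ 1
  obtain ⟨a, b, hab, ha, hb, ha_ne, hb_ne⟩ :=
    exists_lt_forall_ne_endpoints hγ zero_le_one (by rwa [hγ0, hγ1])
  obtain ⟨β, hβc, hβi, hβ0, hβ1, hβr⟩ := exists_injective_path_of_forall_ne hγ hab ha_ne hb_ne
  exact ⟨β, hβc, hβi, by rw [hβ0, ha, hγ0], by rw [hβ1, hb, hγ1],
    hβr.trans ((image_subset_range _ _).trans (IccExtend_range _ _).subset)⟩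
end
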